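/- There is an absolute constant C such that for every positive integer n and every complex number z, the spherical derivative of f_n(z) = ∏_{k=−n}^{n} tanh(z + 2k) satisfies f_n^#(z) = |f_n'(z)|/(1 + |f_n(z)|²) ≤ C. -/

import Mathlib

/-!
Write `x_k = Re z + 2k` and pick `k₀` with `|x_{k₀}| ≤ 1`, so that `|x_k| ≥ |k - k₀|` for
`k ≠ k₀`. A factor `tanh u` with `Re u = x ≠ 0` satisfies `|‖tanh u‖² - 1| ≤ 1/sinh² x` and
`‖tanh' u‖ ≤ 1/sinh² x ≤ 1/x²`, and `∑_{k ≠ k₀} 1/sinh² x_k ≤ ∑_{m ∈ ℤ} 1/m²`. If also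
`|x_{k₀}| ≥ 1/2` (or `k₀` is not an index), the product and its derivative are bounded
outright. Otherwise the product `g` of the factors with `k ≠ k₀` is bounded above and away from
`0` with bounded derivative, while `T = tanh (· + 2k₀)` satisfies `T' = 1 - T²`, which keeps
`|(Tg)'| / (1 + |Tg|²)` bounded. At a pole of `T` the product is not differentiable, and there
`deriv` takes the junk value `0`.
-/

open Complex Finset Filter Topology

theorem Real.inv_sinh_sq_le_of_le_abs {x c : ℝ} (hc : 0 < c) (h : c ≤ |x|) :
    (Real.sinh x ^ 2)⁻¹ ≤ (c ^ 2)⁻¹ := by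
  rw [← sq_abs (Real.sinh x), Real.abs_sinh]
  exact inv_anti₀ (by positivity)
    (pow_le_pow_left₀ hc.le (h.trans (Real.self_le_sinh_iff.mpr (abs_nonneg x))) 2)

namespace Complex

theorem abs_sinh_re_le_norm_cosh (u : ℂ) : |Real.sinh u.re| ≤ ‖cosh u‖ := by
  have h := abs_norm_sub_norm_le (exp u) (-exp (-u))
  rw [norm_neg, sub_neg_eq_add, ← two_cosh, norm_exp, norm_exp, neg_re, norm_mul,
    Complex.norm_two] at h
  rw [Real.sinh_eq, abs_div, abs_two]
  linarith

theorem cosh_ne_zero_of_re_ne_zero {u : ℂ} (h : u.re ≠ 0) : cosh u ≠ 0 := by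
  rw [← norm_pos_iff]
  exact (abs_pos.mpr (Real.sinh_ne_zero.mpr h)).trans_le (abs_sinh_re_le_norm_cosh u)

theorem tanh_sq {u : ℂ} (h : cosh u ≠ 0) : tanh u ^ 2 = 1 - (cosh u ^ 2)⁻¹ := by
  rw [tanh_eq_sinh_div_cosh]
  field_simp
  linear_combination -cosh_sq_sub_sinh_sq u

theorem hasDerivAt_tanh {u : ℂ} (h : cosh u ≠ 0) : HasDerivAt tanh (cosh u ^ 2)⁻¹ u := by
  have h' := (hasDerivAt_sinh u).div (hasDerivAt_cosh u) h
  rw [show sinh / cosh = tanh from funext fun w => (tanh_eq_sinh_div_cosh w).symm] at h'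
  refine h'.congr_deriv ?_
  rw [← sq, ← sq, cosh_sq_sub_sinh_sq, one_div]

theorem norm_inv_cosh_sq_le {u : ℂ} (h : u.re ≠ 0) :
    ‖(cosh u ^ 2)⁻¹‖ ≤ (Real.sinh u.re ^ 2)⁻¹ := by
  rw [norm_inv, norm_pow, ← sq_abs (Real.sinh u.re)]
  exact inv_anti₀ (pow_pos (abs_pos.mpr (Real.sinh_ne_zero.mpr h)) 2)
    (pow_le_pow_left₀ (abs_nonneg _) (abs_sinh_re_le_norm_cosh u) 2)

theorem norm_inv_cosh_sq_le_one_add {u : ℂ} (h : cosh u ≠ 0) :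
    ‖(cosh u ^ 2)⁻¹‖ ≤ 1 + ‖tanh u‖ ^ 2 := by
  rw [← norm_pow, ← norm_one (α := ℂ),
    show (cosh u ^ 2)⁻¹ = 1 - tanh u ^ 2 by rw [tanh_sq h]; ring]
  exact norm_sub_le _ _

theorem abs_norm_tanh_sq_sub_one_le {u : ℂ} (h : u.re ≠ 0) :
    |‖tanh u‖ ^ 2 - 1| ≤ (Real.sinh u.re ^ 2)⁻¹ := by
  rw [← norm_pow, tanh_sq (cosh_ne_zero_of_re_ne_zero h)]
  calc |‖1 - (cosh u ^ 2)⁻¹‖ - 1| = |‖1 - (cosh u ^ 2)⁻¹‖ - ‖(1 : ℂ)‖| := by rw [norm_one]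
    _ ≤ ‖(1 - (cosh u ^ 2)⁻¹) - 1‖ := abs_norm_sub_norm_le _ _
    _ ≤ _ := by rw [sub_sub_cancel_left, norm_neg]; exact norm_inv_cosh_sq_le h

theorem norm_tanh_le_exp {u : ℂ} (h : u.re ≠ 0) :
    ‖tanh u‖ ≤ Real.exp (Real.sinh u.re ^ 2)⁻¹ := by
  have hsq := (abs_le.mp (abs_norm_tanh_sq_sub_one_le h)).2
  have hexp := Real.add_one_le_exp (Real.sinh u.re ^ 2)⁻¹
  have hq : 0 ≤ (Real.sinh u.re ^ 2)⁻¹ := by positivity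
  nlinarith [norm_nonneg (tanh u)]

theorem exp_neg_two_mul_le_norm_tanh {u : ℂ} (h : u.re ≠ 0)
    (hq : (Real.sinh u.re ^ 2)⁻¹ ≤ 1 / 2) :
    Real.exp (-2 * (Real.sinh u.re ^ 2)⁻¹) ≤ ‖tanh u‖ := by
  set q := (Real.sinh u.re ^ 2)⁻¹
  have hsq := (abs_le.mp (abs_norm_tanh_sq_sub_one_le h)).1
  have hq0 : 0 ≤ q := by positivity
  -- `exp (-2q) ≤ 1 / (1 + 2q) ≤ 1 - q` for `0 ≤ q ≤ 1/2`
  have hexp : Real.exp (-2 * q) ≤ 1 - q := by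
    have h1 := Real.add_one_le_exp (2 * q)
    have h2 : Real.exp (-2 * q) * Real.exp (2 * q) = 1 := by rw [← Real.exp_add]; simp
    nlinarith [Real.exp_pos (-2 * q)]
  nlinarith [norm_nonneg (tanh u)]

theorem hasDerivAt_tanh_add {z c : ℂ} (h : cosh (z + c) ≠ 0) :
    HasDerivAt (fun w => tanh (w + c)) (cosh (z + c) ^ 2)⁻¹ z :=
  (hasDerivAt_tanh h).comp_add_const z c

theorem tanh_add_mul_tanh {P ε : ℂ} (hP : cosh P = 0) (hs : sinh ε ≠ 0) (hc : cosh ε ≠ 0) :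
    tanh (P + ε) * tanh ε = 1 := by
  have hsP : sinh P ≠ 0 := fun h => by simpa [hP, h] using cosh_sq_sub_sinh_sq P
  rw [tanh_eq_sinh_div_cosh, tanh_eq_sinh_div_cosh, sinh_add, cosh_add, hP]
  field_simp
  ring

theorem not_continuousAt_tanh_add {z c : ℂ} (hP : cosh (z + c) = 0) :
    ¬ ContinuousAt (fun w => tanh (w + c)) z := by
  intro hcont
  have hz : Tendsto (fun ε : ℝ => z + ε) (𝓝[>] 0) (𝓝 z) := by
    have : Continuous (fun ε : ℝ => z + ε) := by fun_prop
    simpa using (this.tendsto 0).mono_left nhdsWithin_le_nhds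
  have h0 : Tendsto (fun ε : ℝ => tanh (ε : ℂ)) (𝓝[>] 0) (𝓝 0) := by
    have hc : ContinuousAt tanh ((0 : ℝ) : ℂ) := (hasDerivAt_tanh (by simp)).continuousAt
    have := (hc.comp continuous_ofReal.continuousAt).tendsto.mono_left
      (nhdsWithin_le_nhds (s := Set.Ioi 0))
    simpa only [Function.comp_def, ofReal_zero, tanh_zero] using this
  have hlim := (hcont.tendsto.comp hz).mul h0
  rw [mul_zero] at hlim
  have hone : (fun ε : ℝ => tanh (z + ε + c) * tanh (ε : ℂ)) =ᶠ[𝓝[>] 0] fun _ => 1 := by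
    filter_upwards [self_mem_nhdsWithin] with ε (hε : 0 < ε)
    rw [add_right_comm]
    refine tanh_add_mul_tanh hP ?_ ?_
    · rw [← ofReal_sinh, ofReal_ne_zero]; exact (Real.sinh_pos_iff.mpr hε).ne'
    · rw [← ofReal_cosh, ofReal_ne_zero]; exact (Real.cosh_pos ε).ne'
  exact zero_ne_one (tendsto_nhds_unique hlim (tendsto_const_nhds.congr' hone.symm))

end Complex

theorem norm_prod_le_exp_sum {ι 𝕜 : Type*} [NormedField 𝕜] {t : Finset ι} {a : ι → 𝕜}
    {q : ι → ℝ} (h : ∀ i ∈ t, ‖a i‖ ≤ Real.exp (q i)) :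
    ‖∏ i ∈ t, a i‖ ≤ Real.exp (∑ i ∈ t, q i) := by
  rw [norm_prod, Real.exp_sum]
  exact prod_le_prod (fun _ _ => norm_nonneg _) h

theorem exp_sum_le_norm_prod {ι 𝕜 : Type*} [NormedField 𝕜] {t : Finset ι} {a : ι → 𝕜}
    {q : ι → ℝ} (h : ∀ i ∈ t, Real.exp (q i) ≤ ‖a i‖) :
    Real.exp (∑ i ∈ t, q i) ≤ ‖∏ i ∈ t, a i‖ := by
  rw [norm_prod, Real.exp_sum]
  exact prod_le_prod (fun _ _ => (Real.exp_pos _).le) h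

theorem norm_deriv_prod_le {ι 𝕜 : Type*} [NontriviallyNormedField 𝕜] {t : Finset ι}
    {f : ι → 𝕜 → 𝕜} {z : 𝕜} {q : ι → ℝ} (hq : ∀ i ∈ t, 0 ≤ q i)
    (hf : ∀ i ∈ t, DifferentiableAt 𝕜 (f i) z) (hfz : ∀ i ∈ t, ‖f i z‖ ≤ Real.exp (q i))
    (hf' : ∀ i ∈ t, ‖deriv (f i) z‖ ≤ q i) :
    ‖deriv (fun w => ∏ i ∈ t, f i w) z‖ ≤ Real.exp (∑ i ∈ t, q i) * ∑ i ∈ t, q i := by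
  classical
  rw [deriv_fun_finsetProd hf, mul_sum]
  refine (norm_sum_le _ _).trans (sum_le_sum fun i hi => ?_)
  rw [norm_smul]
  have hsub : ∑ j ∈ t.erase i, q j ≤ ∑ j ∈ t, q j :=
    sum_le_sum_of_subset_of_nonneg (erase_subset i t) fun j hj _ => hq j hj
  gcongr
  · exact (norm_prod_le_exp_sum fun j hj => hfz j (mem_of_mem_erase hj)).trans
      (Real.exp_le_exp.mpr hsub)
  · exact hf' i hi

theorem deriv_mul_eq_zero_of_not_continuousAt {𝕜 : Type*} [NontriviallyNormedField 𝕜]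
    {T g : 𝕜 → 𝕜} {z : 𝕜} (hg : DifferentiableAt 𝕜 g z) (hgz : g z ≠ 0)
    (hT : ¬ ContinuousAt T z) : deriv (fun w => T w * g w) z = 0 := by
  refine deriv_zero_of_not_differentiableAt fun hf => hT ?_
  refine (hf.continuousAt.div hg.continuousAt hgz).congr ?_
  filter_upwards [hg.continuousAt.eventually_ne hgz] with w hw
  exact mul_div_cancel_right₀ _ hw

noncomputable def sphericalDeriv (f : ℂ → ℂ) (z : ℂ) : ℝ := ‖deriv f z‖ / (1 + ‖f z‖ ^ 2)

theorem sphericalDeriv_le_norm_deriv (f : ℂ → ℂ) (z : ℂ) : sphericalDeriv f z ≤ ‖deriv f z‖ :=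
  div_le_self (norm_nonneg _) (by nlinarith [norm_nonneg (f z)])

theorem sphericalDeriv_mul_le {T g : ℂ → ℂ} {z : ℂ} {m M L : ℝ} (hT : DifferentiableAt ℂ T z)
    (hg : DifferentiableAt ℂ g z) (hT' : ‖deriv T z‖ ≤ 1 + ‖T z‖ ^ 2) (hm : 0 < m)
    (hmg : m ≤ ‖g z‖) (hgM : ‖g z‖ ≤ M) (hg' : ‖deriv g z‖ ≤ L) :
    sphericalDeriv (fun w => T w * g w) z ≤ M + (1 + L) / m := by
  rw [sphericalDeriv, deriv_fun_mul hT hg, norm_mul, div_le_iff₀ (by positivity)]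
  set a := ‖T z‖
  set p := ‖g z‖
  have ha : 0 ≤ a := norm_nonneg _
  have hnum : ‖deriv T z * g z + T z * deriv g z‖ ≤ (1 + a ^ 2) * p + a * L := by
    refine (norm_add_le _ _).trans ?_
    rw [norm_mul, norm_mul]
    gcongr
  -- `(1 + a²) p / (1 + a²p²) ≤ p + 1 / p` and `a / (1 + a²p²) ≤ 1 / p`
  have hap : a * p ≤ 1 + (a * p) ^ 2 := by nlinarith [sq_nonneg (a * p - 1)]
  have hL : 0 ≤ L := (norm_nonneg _).trans hg'
  have key : m * ((1 + a ^ 2) * p + a * L) ≤ (m * M + 1 + L) * (1 + (a * p) ^ 2) := by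
    nlinarith [mul_le_mul_of_nonneg_left hmg (sq_nonneg a), mul_le_mul_of_nonneg_left hap hL,
      mul_le_mul_of_nonneg_right hmg (mul_nonneg ha hL), mul_nonneg hm.le (sq_nonneg (a * p)),
      mul_le_mul_of_nonneg_left hgM hm.le]
  rw [show M + (1 + L) / m = (m * M + 1 + L) / m by field_simp; ring, div_mul_eq_mul_div,
    le_div_iff₀ hm]
  nlinarith [mul_le_mul_of_nonneg_left hnum hm.le]

noncomputable def tanhProd (t : Finset ℤ) (w : ℂ) : ℂ := ∏ k ∈ t, tanh (w + 2 * k)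

section tanhProd

variable {t : Finset ℤ} {z : ℂ}

theorem hasDerivAt_tanh_add_two_mul {k : ℤ} (h : (z + 2 * k).re ≠ 0) :
    HasDerivAt (fun w => tanh (w + 2 * k)) (cosh (z + 2 * k) ^ 2)⁻¹ z :=
  hasDerivAt_tanh_add (cosh_ne_zero_of_re_ne_zero h)

theorem differentiableAt_tanhProd (h : ∀ k ∈ t, (z + 2 * k).re ≠ 0) :
    DifferentiableAt ℂ (tanhProd t) z :=
  DifferentiableAt.fun_finsetProd fun k hk =>
    (hasDerivAt_tanh_add_two_mul (h k hk)).differentiableAt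

theorem norm_tanhProd_le (h : ∀ k ∈ t, (z + 2 * k).re ≠ 0) :
    ‖tanhProd t z‖ ≤ Real.exp (∑ k ∈ t, (Real.sinh (z + 2 * k).re ^ 2)⁻¹) :=
  norm_prod_le_exp_sum fun k hk => norm_tanh_le_exp (h k hk)

theorem exp_neg_two_mul_le_norm_tanhProd (h : ∀ k ∈ t, (z + 2 * k).re ≠ 0)
    (hq : ∀ k ∈ t, (Real.sinh (z + 2 * k).re ^ 2)⁻¹ ≤ 1 / 2) :
    Real.exp (-2 * ∑ k ∈ t, (Real.sinh (z + 2 * k).re ^ 2)⁻¹) ≤ ‖tanhProd t z‖ := by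
  rw [mul_sum]
  exact exp_sum_le_norm_prod fun k hk => exp_neg_two_mul_le_norm_tanh (h k hk) (hq k hk)

theorem norm_deriv_tanhProd_le (h : ∀ k ∈ t, (z + 2 * k).re ≠ 0) :
    ‖deriv (tanhProd t) z‖ ≤ Real.exp (∑ k ∈ t, (Real.sinh (z + 2 * k).re ^ 2)⁻¹) *
      ∑ k ∈ t, (Real.sinh (z + 2 * k).re ^ 2)⁻¹ :=
  norm_deriv_prod_le (fun _ _ => by positivity)
    (fun k hk => (hasDerivAt_tanh_add_two_mul (h k hk)).differentiableAt)
    (fun k hk => norm_tanh_le_exp (h k hk))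
    (fun k hk => (hasDerivAt_tanh_add_two_mul (h k hk)).deriv ▸ norm_inv_cosh_sq_le (h k hk))

end tanhProd

theorem one_le_abs_intCast_sub {k k₀ : ℤ} (h : k ≠ k₀) : 1 ≤ |((k - k₀ : ℤ) : ℝ)| := by
  rw [← Int.cast_abs]
  exact_mod_cast Int.one_le_abs (sub_ne_zero.mpr h)

theorem two_mul_abs_sub_sub_le (z : ℂ) (k k₀ : ℤ) :
    2 * |((k - k₀ : ℤ) : ℝ)| - |(z + 2 * k₀).re| ≤ |(z + 2 * k).re| := by
  have h : (2 * (k - k₀ : ℤ) : ℝ) = (z + 2 * k).re - (z + 2 * k₀).re := by simp; ring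
  have := abs_sub (z + 2 * k).re (z + 2 * k₀).re
  rw [← h, abs_mul, abs_two] at this
  linarith

theorem abs_re_add_two_mul_round_le (z : ℂ) : |(z + 2 * round (-z.re / 2)).re| ≤ 1 := by
  have h : (z + 2 * round (-z.re / 2)).re = -2 * (-z.re / 2 - round (-z.re / 2)) := by
    simp; ring
  rw [h, abs_mul]
  norm_num
  linarith [abs_sub_round (-z.re / 2)]

theorem sum_erase_inv_sinh_sq_le (t : Finset ℤ) {z : ℂ} {k₀ : ℤ}
    (hnear : |(z + 2 * k₀).re| ≤ 1) :
    ∑ k ∈ t.erase k₀, (Real.sinh (z + 2 * k).re ^ 2)⁻¹ ≤ ∑' m : ℤ, ((m : ℝ) ^ 2)⁻¹ := by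
  have hsum : Summable fun m : ℤ => ((m : ℝ) ^ 2)⁻¹ := by
    simpa using Real.summable_one_div_int_pow.mpr one_lt_two
  calc ∑ k ∈ t.erase k₀, (Real.sinh (z + 2 * k).re ^ 2)⁻¹
      ≤ ∑ k ∈ t.erase k₀, (((k - k₀ : ℤ) : ℝ) ^ 2)⁻¹ := by
        refine sum_le_sum fun k hk => ?_
        have hk₁ := one_le_abs_intCast_sub (ne_of_mem_erase hk)
        rw [← sq_abs ((k - k₀ : ℤ) : ℝ)]
        exact Real.inv_sinh_sq_le_of_le_abs (by linarith)
          (by linarith [two_mul_abs_sub_sub_le z k k₀])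
    _ ≤ ∑' k : ℤ, (((k - k₀ : ℤ) : ℝ) ^ 2)⁻¹ :=
        ((Equiv.subRight k₀).summable_iff.mpr hsum).sum_le_tsum _ fun _ _ => by positivity
    _ = ∑' m : ℤ, ((m : ℝ) ^ 2)⁻¹ := (Equiv.subRight k₀).tsum_eq fun m : ℤ => ((m : ℝ) ^ 2)⁻¹

theorem sphericalDeriv_tanhProd_le_of_far {t : Finset ℤ} {z : ℂ} {k₀ : ℤ}
    (hnear : |(z + 2 * k₀).re| ≤ 1) (hfar : k₀ ∈ t → 1 / 2 ≤ |(z + 2 * k₀).re|) :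
    sphericalDeriv (tanhProd t) z ≤
      Real.exp (4 + ∑' m : ℤ, ((m : ℝ) ^ 2)⁻¹) * (4 + ∑' m : ℤ, ((m : ℝ) ^ 2)⁻¹) := by
  have hre : ∀ k ∈ t, 1 / 2 ≤ |(z + 2 * k).re| := by
    intro k hk
    rcases eq_or_ne k k₀ with rfl | hne
    · exact hfar hk
    · linarith [two_mul_abs_sub_sub_le z k k₀, one_le_abs_intCast_sub hne]
  have hre₀ : ∀ k ∈ t, (z + 2 * k).re ≠ 0 := fun k hk => abs_pos.mp (by linarith [hre k hk])
  have hS : ∑ k ∈ t, (Real.sinh (z + 2 * k).re ^ 2)⁻¹ ≤ 4 + ∑' m : ℤ, ((m : ℝ) ^ 2)⁻¹ := by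
    have htail := sum_erase_inv_sinh_sq_le t hnear
    by_cases hk₀ : k₀ ∈ t
    · have h₀ : (Real.sinh (z + 2 * k₀).re ^ 2)⁻¹ ≤ 4 :=
        (Real.inv_sinh_sq_le_of_le_abs (by norm_num) (hre k₀ hk₀)).trans (by norm_num)
      rw [← add_sum_erase t _ hk₀]
      linarith
    · rw [← erase_eq_of_notMem hk₀]
      linarith
  have hS₀ : 0 ≤ ∑ k ∈ t, (Real.sinh (z + 2 * k).re ^ 2)⁻¹ :=
    sum_nonneg fun _ _ => by positivity
  calc sphericalDeriv (tanhProd t) z ≤ ‖deriv (tanhProd t) z‖ :=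
        sphericalDeriv_le_norm_deriv _ _
    _ ≤ _ := norm_deriv_tanhProd_le hre₀
    _ ≤ _ := by gcongr

theorem sphericalDeriv_tanhProd_le_of_near {t : Finset ℤ} {z : ℂ} {k₀ : ℤ} (hk₀ : k₀ ∈ t)
    (hnear : |(z + 2 * k₀).re| < 1 / 2) :
    sphericalDeriv (tanhProd t) z ≤ Real.exp (∑' m : ℤ, ((m : ℝ) ^ 2)⁻¹) +
      (1 + Real.exp (∑' m : ℤ, ((m : ℝ) ^ 2)⁻¹) * ∑' m : ℤ, ((m : ℝ) ^ 2)⁻¹) /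
        Real.exp (-2 * ∑' m : ℤ, ((m : ℝ) ^ 2)⁻¹) := by
  have hsplit : tanhProd t = fun w => tanh (w + 2 * k₀) * tanhProd (t.erase k₀) w :=
    funext fun w => (mul_prod_erase t (fun k => tanh (w + 2 * k)) hk₀).symm
  have hfar : ∀ k ∈ t.erase k₀, 3 / 2 ≤ |(z + 2 * k).re| := fun k hk => by
    linarith [two_mul_abs_sub_sub_le z k k₀, one_le_abs_intCast_sub (ne_of_mem_erase hk)]
  have hre : ∀ k ∈ t.erase k₀, (z + 2 * k).re ≠ 0 := fun k hk =>
    abs_pos.mp (by linarith [hfar k hk])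
  have hq : ∀ k ∈ t.erase k₀, (Real.sinh (z + 2 * k).re ^ 2)⁻¹ ≤ 1 / 2 := fun k hk =>
    (Real.inv_sinh_sq_le_of_le_abs (by norm_num) (hfar k hk)).trans (by norm_num)
  have hS := sum_erase_inv_sinh_sq_le t (by linarith)
  have hS₀ : 0 ≤ ∑ k ∈ t.erase k₀, (Real.sinh (z + 2 * k).re ^ 2)⁻¹ :=
    sum_nonneg fun _ _ => by positivity
  have hlow := exp_neg_two_mul_le_norm_tanhProd hre hq
  have hg := differentiableAt_tanhProd hre
  rw [hsplit]
  by_cases hpole : cosh (z + 2 * k₀) = 0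
  · have hgz : tanhProd (t.erase k₀) z ≠ 0 :=
      norm_pos_iff.mp ((Real.exp_pos _).trans_le hlow)
    rw [sphericalDeriv, deriv_mul_eq_zero_of_not_continuousAt hg hgz
      (not_continuousAt_tanh_add hpole), norm_zero, zero_div]
    positivity
  · have hT := hasDerivAt_tanh_add hpole
    exact sphericalDeriv_mul_le hT.differentiableAt hg
      (hT.deriv ▸ norm_inv_cosh_sq_le_one_add hpole) (Real.exp_pos _)
      ((Real.exp_le_exp.mpr (by linarith)).trans hlow)
      ((norm_tanhProd_le hre).trans (Real.exp_le_exp.mpr hS))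
      ((norm_deriv_tanhProd_le hre).trans (by gcongr))

theorem fn_spherical_deriv_bounded :
    ∃ C : ℝ, ∀ n : ℕ, 1 ≤ n → ∀ z : ℂ,
      ‖deriv (fun w => ∏ k ∈ Finset.Icc (-(n : ℤ)) (n : ℤ),
          Complex.tanh (w + 2 * k)) z‖ /
        (1 + ‖∏ k ∈ Finset.Icc (-(n : ℤ)) (n : ℤ),
          Complex.tanh (z + 2 * k)‖ ^ 2) ≤ C := by
  set Z := ∑' m : ℤ, ((m : ℝ) ^ 2)⁻¹
  refine ⟨max (Real.exp (4 + Z) * (4 + Z))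
    (Real.exp Z + (1 + Real.exp Z * Z) / Real.exp (-2 * Z)), fun n _ z => ?_⟩
  change sphericalDeriv (tanhProd (Icc (-(n : ℤ)) n)) z ≤ _
  have hnear := abs_re_add_two_mul_round_le z
  by_cases h : round (-z.re / 2) ∈ Icc (-(n : ℤ)) n ∧ |(z + 2 * round (-z.re / 2)).re| < 1 / 2
  · exact le_max_of_le_right (sphericalDeriv_tanhProd_le_of_near h.1 h.2)
  · exact le_max_of_le_left
      (sphericalDeriv_tanhProd_le_of_far hnear fun hk => not_lt.mp (h ⟨hk, ·⟩))
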